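/- Let (γ,v₁,v₂) be a pseudo-spherical spacelike framed curve on I with ⟨v₁,v₁⟩ = ε and curvature (α,ℓ,m,n); assume m(s)+n(s) ≠ 0 and m(s)−n(s) ≠ 0 for all s ∈ I. For each sign ± set σ±(s) = α(s)(−(m′(s)±n′(s)) + ℓ(s)(n(s)±m(s))) + α′(s)(m(s)±n(s)). Let v₀ ∈ AdS³ and s₀ ∈ I. Then d_{v₀}(s₀) = d′_{v₀}(s₀) = d″_{v₀}(s₀) = d‴_{v₀}(s₀) = 0 if and only if there exist a, b, c ∈ ℝ with v₀ = γ(s₀) + a v₁(s₀) + b v₂(s₀) + c μ(s₀) and c² = −ε(a² − b²), and at least one of the following holds: (i) α(s₀) = α′(s₀) = α″(s₀) = 0; (ii) α(s₀) = α′(s₀) = 0 and there exist λ ∈ ℝ and a sign ± with v₀ = γ(s₀) + λ(v₁(s₀) ± v₂(s₀)); (iii) α(s₀) = 0 and v₀ = γ(s₀); (iv) for some sign ±, v₀ = γ(s₀) − (α(s₀)/(m(s₀) ± n(s₀)))·(v₁(s₀) ± v₂(s₀)) and σ±(s₀) = 0. -/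

import Mathlib

noncomputable section

/-- ℝ⁴ as `Fin 4 → ℝ`, carrying the pseudo-scalar product of index 2. -/
abbrev R4 : Type := Fin 4 → ℝ

/-- ℝ³ as `Fin 3 → ℝ`. -/
abbrev R3 : Type := Fin 3 → ℝ

/-- The pseudo-scalar product ⟨u,w⟩ = −u₁w₁ − u₂w₂ + u₃w₃ + u₄w₄ of ℝ⁴₂. -/
def pip (u w : R4) : ℝ :=
  -(u 0 * w 0) - u 1 * w 1 + u 2 * w 2 + u 3 * w 3

/-- The anti-de Sitter 3-space AdS³ = {u : ⟨u,u⟩ = −1}. -/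
def AdS3 : Set R4 := {u | pip u u = -1}

/-- The 3×3 minor of the rows u,v,w using columns a,b,c. -/
def minor3 (u v w : R4) (a b c : Fin 4) : ℝ :=
  u a * (v b * w c - v c * w b) - u b * (v a * w c - v c * w a)
    + u c * (v a * w b - v b * w a)

/-- The triple product u×v×w in ℝ⁴₂, the formal determinant with first row
(−e₁,−e₂,e₃,e₄). -/
def trip (u v w : R4) : R4 :=
  ![-(minor3 u v w 1 2 3), minor3 u v w 0 2 3, minor3 u v w 0 1 3,
    -(minor3 u v w 0 1 2)]

/-- A pseudo-spherical spacelike framed curve on `I` with sign `ε`. -/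
structure IsFramedCurve (I : Set ℝ) (γ v₁ v₂ : ℝ → R4) (ε : ℝ) : Prop where
  eps : ε = 1 ∨ ε = -1
  smooth_γ : ContDiffOn ℝ (⊤ : ℕ∞) γ I
  smooth_v₁ : ContDiffOn ℝ (⊤ : ℕ∞) v₁ I
  smooth_v₂ : ContDiffOn ℝ (⊤ : ℕ∞) v₂ I
  mem_ads : ∀ s ∈ I, γ s ∈ AdS3
  norm_v₁ : ∀ s ∈ I, pip (v₁ s) (v₁ s) = ε
  norm_v₂ : ∀ s ∈ I, pip (v₂ s) (v₂ s) = -ε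
  orth_v₁v₂ : ∀ s ∈ I, pip (v₁ s) (v₂ s) = 0
  orth_γv₁ : ∀ s ∈ I, pip (γ s) (v₁ s) = 0
  orth_γv₂ : ∀ s ∈ I, pip (γ s) (v₂ s) = 0
  tang_v₁ : ∀ s ∈ I, pip (deriv γ s) (v₁ s) = 0
  tang_v₂ : ∀ s ∈ I, pip (deriv γ s) (v₂ s) = 0

/-- μ(s) = γ(s)×v₁(s)×v₂(s). -/
def muF (γ v₁ v₂ : ℝ → R4) (s : ℝ) : R4 := trip (γ s) (v₁ s) (v₂ s)

/-- α(s) = ⟨γ′(s), μ(s)⟩. -/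
def curvA (γ v₁ v₂ : ℝ → R4) (s : ℝ) : ℝ := pip (deriv γ s) (muF γ v₁ v₂ s)

/-- ℓ(s) = −ε⟨v₁′(s), v₂(s)⟩. -/
def curvL (ε : ℝ) (v₁ v₂ : ℝ → R4) (s : ℝ) : ℝ := -ε * pip (deriv v₁ s) (v₂ s)

/-- m(s) = ⟨v₁′(s), μ(s)⟩. -/
def curvM (γ v₁ v₂ : ℝ → R4) (s : ℝ) : ℝ := pip (deriv v₁ s) (muF γ v₁ v₂ s)

/-- n(s) = ⟨v₂′(s), μ(s)⟩. -/
def curvN (γ v₁ v₂ : ℝ → R4) (s : ℝ) : ℝ := pip (deriv v₂ s) (muF γ v₁ v₂ s)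

/-- The nullcone front NF±(s,λ) = γ(s) + λ(v₁(s) ± v₂(s)), with sign `e = ±1`. -/
def NF (γ v₁ v₂ : ℝ → R4) (e : ℝ) (q : ℝ × ℝ) : R4 :=
  γ q.1 + q.2 • (v₁ q.1 + e • v₂ q.1)

/-- The function σ± of Theorem 4.3, with sign `e = ±1`. -/
def sigmaF (γ v₁ v₂ : ℝ → R4) (ε e : ℝ) (s : ℝ) : ℝ :=
  curvA γ v₁ v₂ s *
      (-(deriv (curvM γ v₁ v₂) s + e * deriv (curvN γ v₁ v₂) s)
        + curvL ε v₁ v₂ s * (curvN γ v₁ v₂ s + e * curvM γ v₁ v₂ s))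
    + deriv (curvA γ v₁ v₂) s * (curvM γ v₁ v₂ s + e * curvN γ v₁ v₂ s)

/-- A point is a singular point of `f : ℝ×ℝ → ℝ⁴₂` when the two partial
derivatives are linearly dependent (the differential has rank < 2). -/
def SingularAt (f : ℝ × ℝ → R4) (q : ℝ × ℝ) : Prop :=
  ¬ LinearIndependent ℝ
      ![deriv (fun t => f (t, q.2)) q.1, deriv (fun l => f (q.1, l)) q.2]

/-- The cuspidal edge model CE(u,v) = (u², u³, v). -/
def CE : ℝ × ℝ → R3 := fun q => ![q.1 ^ 2, q.1 ^ 3, q.2]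

/-- The swallowtail model SW(u,v) = (3u⁴+u²v, 4u³+2uv, v). -/
def SW : ℝ × ℝ → R3 :=
  fun q => ![3 * q.1 ^ 4 + q.1 ^ 2 * q.2, 4 * q.1 ^ 3 + 2 * q.1 * q.2, q.2]

/-- `f` (a map into AdS³) is locally diffeomorphic at `p` to the model `g` at `0`:
there are a smooth diffeomorphism `φ` from a neighborhood `U` of `0` in ℝ² onto a
neighborhood `V` of `p` with `φ 0 = p`, and a smooth diffeomorphism `Ψ` from a
neighborhood `W` of `f p` in the submanifold AdS³ onto an open set `W'` of ℝ³
with `Ψ (f p) = g 0`, such that `Ψ ∘ f ∘ φ = g` near `0`. -/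
def LocallyDiffeoAt (f : ℝ × ℝ → R4) (p : ℝ × ℝ) (g : ℝ × ℝ → R3) : Prop :=
  ∃ (U V : Set (ℝ × ℝ)) (φ φinv : ℝ × ℝ → ℝ × ℝ)
    (W : Set R4) (W' : Set R3) (Ψ : R4 → R3) (Ψinv : R3 → R4),
    IsOpen U ∧ (0 : ℝ × ℝ) ∈ U ∧ IsOpen V ∧ p ∈ V ∧
    ContDiffOn ℝ (⊤ : ℕ∞) φ U ∧ Set.BijOn φ U V ∧ φ 0 = p ∧
    ContDiffOn ℝ (⊤ : ℕ∞) φinv V ∧ (∀ x ∈ U, φinv (φ x) = x) ∧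
    (∃ O : Set R4, IsOpen O ∧ W = O ∩ AdS3) ∧ f p ∈ W ∧ IsOpen W' ∧
    ContDiffOn ℝ (⊤ : ℕ∞) Ψ W ∧ Set.BijOn Ψ W W' ∧ Ψ (f p) = g 0 ∧
    ContDiffOn ℝ (⊤ : ℕ∞) Ψinv W' ∧ (∀ y ∈ W, Ψinv (Ψ y) = y) ∧
    (∀ x ∈ U, f (φ x) ∈ W) ∧ (∀ x ∈ U, Ψ (f (φ x)) = g x)

/-- The anti-de Sitter distance-squared function d_{v₀}(s) = ⟨γ(s)−v₀, γ(s)−v₀⟩. -/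
def dSq (γ : ℝ → R4) (v₀ : R4) (s : ℝ) : ℝ := pip (γ s - v₀) (γ s - v₀)


/-! #### algebraic helpers -/

lemma pip_comm (u w : R4) : pip u w = pip w u := by simp only [pip]; ring

lemma pip_trip_fst (a b c : R4) : pip (trip a b c) a = 0 := by
  simp [pip, trip, minor3]; ring
lemma pip_trip_snd (a b c : R4) : pip (trip a b c) b = 0 := by
  simp [pip, trip, minor3]; ring
lemma pip_trip_thd (a b c : R4) : pip (trip a b c) c = 0 := by
  simp [pip, trip, minor3]; ring

lemma pip_trip_self (a b c : R4) :
    pip (trip a b c) (trip a b c) =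
      pip a a * (pip b b * pip c c - pip b c * pip b c)
      - pip a b * (pip a b * pip c c - pip b c * pip a c)
      + pip a c * (pip a b * pip b c - pip b b * pip a c) := by
  simp [pip, trip, minor3]; ring

lemma expansion_key (a b c u : R4) (i : Fin 4) :
    (pip a a * (pip b b * pip c c - pip b c * pip b c)
      - pip a b * (pip a b * pip c c - pip b c * pip a c)
      + pip a c * (pip a b * pip b c - pip b b * pip a c)) * u i =
    pip u (trip a b c) * trip a b c i
      + (pip b b * pip c c - pip b c * pip b c) * pip u a * a i
      + (pip b c * pip a c - pip a b * pip c c) * pip u b * a i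
      + (pip a b * pip b c - pip a c * pip b b) * pip u c * a i
      + (pip a c * pip b c - pip a b * pip c c) * pip u a * b i
      + (pip a a * pip c c - pip a c * pip a c) * pip u b * b i
      + (pip a b * pip a c - pip a a * pip b c) * pip u c * b i
      + (pip a b * pip b c - pip b b * pip a c) * pip u a * c i
      + (pip a c * pip a b - pip a a * pip b c) * pip u b * c i
      + (pip a a * pip b b - pip a b * pip a b) * pip u c * c i := by
  fin_cases i <;> · simp [pip, trip, minor3]; ring

lemma pip_right_add (x u v : R4) : pip x (u + v) = pip x u + pip x v := by
  simp [pip, Pi.add_apply]; ring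
lemma pip_right_sub (x u v : R4) : pip x (u - v) = pip x u - pip x v := by
  simp [pip, Pi.sub_apply]; ring
lemma pip_right_smul (x : R4) (r : ℝ) (u : R4) : pip x (r • u) = r * pip x u := by
  simp [pip, Pi.smul_apply, smul_eq_mul]; ring
lemma pip_left_add (u v x : R4) : pip (u + v) x = pip u x + pip v x := by
  simp [pip, Pi.add_apply]; ring
lemma pip_left_smul (r : ℝ) (u x : R4) : pip (r • u) x = r * pip u x := by
  simp [pip, Pi.smul_apply, smul_eq_mul]; ring
lemma pip_lin3 (a b c : ℝ) (x y z w : R4) :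
    pip (a • x + b • y + c • z) w = a * pip x w + b * pip y w + c * pip z w := by
  simp [pip, Pi.add_apply, Pi.smul_apply, smul_eq_mul]; ring
lemma pip_sub_self (x y : R4) :
    pip (x - y) (x - y) = pip x x - 2 * pip x y + pip y y := by
  simp [pip, Pi.sub_apply]; ring

/-- Expansion of any vector in the pseudo-orthonormal frame. -/
lemma expand_frame {a b c : R4} {ε : ℝ} (hε : ε = 1 ∨ ε = -1)
    (haa : pip a a = -1) (hbb : pip b b = ε) (hcc : pip c c = -ε)
    (hab : pip a b = 0) (hac : pip a c = 0) (hbc : pip b c = 0) (u : R4) :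
    u = (-pip u a) • a + (ε * pip u b) • b + (-(ε * pip u c)) • c
        + pip u (trip a b c) • trip a b c := by
  funext i
  have key := expansion_key a b c u i
  rw [haa, hbb, hcc, hab, hac, hbc] at key
  simp only [Pi.add_apply, Pi.smul_apply, smul_eq_mul]
  rcases hε with rfl | rfl <;> · norm_num at key ⊢; linarith

lemma mu_norm {a b c : R4} {ε : ℝ} (hε : ε = 1 ∨ ε = -1)
    (haa : pip a a = -1) (hbb : pip b b = ε) (hcc : pip c c = -ε)
    (hab : pip a b = 0) (hac : pip a c = 0) (hbc : pip b c = 0) :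
    pip (trip a b c) (trip a b c) = 1 := by
  rw [pip_trip_self, haa, hbb, hcc, hab, hac, hbc]
  rcases hε with rfl | rfl <;> norm_num

/-! #### calculus helpers -/

lemma HasDerivAt.pip2 {f g : ℝ → R4} {f' g' : R4} {s : ℝ}
    (hf : HasDerivAt f f' s) (hg : HasDerivAt g g' s) :
    HasDerivAt (fun t => pip (f t) (g t)) (pip f' (g s) + pip (f s) g') s := by
  have hfi : ∀ i, HasDerivAt (fun t => f t i) (f' i) s := fun i => hasDerivAt_pi.mp hf i
  have hgi : ∀ i, HasDerivAt (fun t => g t i) (g' i) s := fun i => hasDerivAt_pi.mp hg i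
  have H := ((((hfi 0).mul (hgi 0)).neg.sub ((hfi 1).mul (hgi 1))).add
      ((hfi 2).mul (hgi 2))).add ((hfi 3).mul (hgi 3))
  refine HasDerivAt.congr_deriv H ?_
  simp only [pip]
  ring

lemma hasDerivAt_pipc {f : ℝ → R4} {f' : R4} {s : ℝ}
    (hf : HasDerivAt f f' s) (w : R4) :
    HasDerivAt (fun t => pip (f t) w) (pip f' w) s := by
  have := hf.pip2 (hasDerivAt_const s w)
  convert this using 1
  simp [pip]

lemma ContDiffOn.pip2 {f g : ℝ → R4} {I : Set ℝ}
    (hf : ContDiffOn ℝ (⊤ : ℕ∞) f I) (hg : ContDiffOn ℝ (⊤ : ℕ∞) g I) :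
    ContDiffOn ℝ (⊤ : ℕ∞) (fun s => pip (f s) (g s)) I := by
  have hfi := contDiffOn_pi.mp hf
  have hgi := contDiffOn_pi.mp hg
  simp only [pip]
  exact ((((hfi 0).mul (hgi 0)).neg.sub ((hfi 1).mul (hgi 1))).add
      ((hfi 2).mul (hgi 2))).add ((hfi 3).mul (hgi 3))

lemma ContDiffOn.trip2 {f g k : ℝ → R4} {I : Set ℝ}
    (hf : ContDiffOn ℝ (⊤ : ℕ∞) f I) (hg : ContDiffOn ℝ (⊤ : ℕ∞) g I)
    (hk : ContDiffOn ℝ (⊤ : ℕ∞) k I) :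
    ContDiffOn ℝ (⊤ : ℕ∞) (fun s => trip (f s) (g s) (k s)) I := by
  have hfi := contDiffOn_pi.mp hf
  have hgi := contDiffOn_pi.mp hg
  have hki := contDiffOn_pi.mp hk
  have M : ∀ a b c : Fin 4,
      ContDiffOn ℝ (⊤ : ℕ∞) (fun s => minor3 (f s) (g s) (k s) a b c) I := by
    intro a b c
    simp only [minor3]
    exact (((hfi a).mul (((hgi b).mul (hki c)).sub ((hgi c).mul (hki b)))).sub
      ((hfi b).mul (((hgi a).mul (hki c)).sub ((hgi c).mul (hki a))))).add
      ((hfi c).mul (((hgi a).mul (hki b)).sub ((hgi b).mul (hki a))))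
  refine contDiffOn_pi.mpr fun i => ?_
  fin_cases i
  · exact (M 1 2 3).neg
  · exact M 0 2 3
  · exact M 0 1 3
  · exact (M 0 1 2).neg

lemma diffAt_of_contDiffOn {f : ℝ → R4} {I : Set ℝ} (hIopen : IsOpen I)
    (hf : ContDiffOn ℝ (⊤ : ℕ∞) f I) {s : ℝ} (hs : s ∈ I) : DifferentiableAt ℝ f s :=
  (hf.contDiffAt (hIopen.mem_nhds hs)).differentiableAt (by simp)

lemma diffAt_of_contDiffOn' {f : ℝ → ℝ} {I : Set ℝ} (hIopen : IsOpen I)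
    (hf : ContDiffOn ℝ (⊤ : ℕ∞) f I) {s : ℝ} (hs : s ∈ I) : DifferentiableAt ℝ f s :=
  (hf.contDiffAt (hIopen.mem_nhds hs)).differentiableAt (by simp)

/-- derivative of a constant pip-pairing. -/
lemma deriv_pip_const {f g : ℝ → R4} {I : Set ℝ} (hIopen : IsOpen I) {s : ℝ}
    (hs : s ∈ I) (hf : DifferentiableAt ℝ f s) (hg : DifferentiableAt ℝ g s)
    {k : ℝ} (hconst : ∀ t ∈ I, pip (f t) (g t) = k) :
    pip (deriv f s) (g s) + pip (f s) (deriv g s) = 0 := by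
  have H := hf.hasDerivAt.pip2 hg.hasDerivAt
  have hev : (fun t => pip (f t) (g t)) =ᶠ[nhds s] fun _ => k :=
    Filter.eventuallyEq_of_mem (hIopen.mem_nhds hs) hconst
  have : deriv (fun t => pip (f t) (g t)) s = 0 := by
    rw [hev.deriv_eq]; simp
  rw [← H.deriv, this]

section Frame
variable {I : Set ℝ} {γ v₁ v₂ : ℝ → R4} {ε : ℝ}

lemma frame_gram (h : IsFramedCurve I γ v₁ v₂ ε) {s : ℝ} (hs : s ∈ I) :
    pip (γ s) (γ s) = -1 ∧ pip (v₁ s) (v₁ s) = ε ∧ pip (v₂ s) (v₂ s) = -ε ∧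
    pip (γ s) (v₁ s) = 0 ∧ pip (γ s) (v₂ s) = 0 ∧ pip (v₁ s) (v₂ s) = 0 ∧
    pip (muF γ v₁ v₂ s) (muF γ v₁ v₂ s) = 1 ∧
    pip (muF γ v₁ v₂ s) (γ s) = 0 ∧ pip (muF γ v₁ v₂ s) (v₁ s) = 0 ∧
    pip (muF γ v₁ v₂ s) (v₂ s) = 0 :=
  ⟨h.mem_ads s hs, h.norm_v₁ s hs, h.norm_v₂ s hs, h.orth_γv₁ s hs,
    h.orth_γv₂ s hs, h.orth_v₁v₂ s hs,
    mu_norm h.eps (h.mem_ads s hs) (h.norm_v₁ s hs) (h.norm_v₂ s hs)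
      (h.orth_γv₁ s hs) (h.orth_γv₂ s hs) (h.orth_v₁v₂ s hs),
    pip_trip_fst _ _ _, pip_trip_snd _ _ _, pip_trip_thd _ _ _⟩

lemma frame_expand (h : IsFramedCurve I γ v₁ v₂ ε) {s : ℝ} (hs : s ∈ I) (u : R4) :
    u = (-pip u (γ s)) • γ s + (ε * pip u (v₁ s)) • v₁ s
        + (-(ε * pip u (v₂ s))) • v₂ s + pip u (muF γ v₁ v₂ s) • muF γ v₁ v₂ s :=
  expand_frame h.eps (h.mem_ads s hs) (h.norm_v₁ s hs) (h.norm_v₂ s hs)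
    (h.orth_γv₁ s hs) (h.orth_γv₂ s hs) (h.orth_v₁v₂ s hs) u

lemma mu_smooth (h : IsFramedCurve I γ v₁ v₂ ε) :
    ContDiffOn ℝ (⊤ : ℕ∞) (muF γ v₁ v₂) I :=
  h.smooth_γ.trip2 h.smooth_v₁ h.smooth_v₂

lemma deriv_gamma_eq (hIopen : IsOpen I) (h : IsFramedCurve I γ v₁ v₂ ε)
    {s : ℝ} (hs : s ∈ I) :
    deriv γ s = curvA γ v₁ v₂ s • muF γ v₁ v₂ s := by
  have hγd := diffAt_of_contDiffOn hIopen h.smooth_γ hs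
  have h1 : pip (deriv γ s) (γ s) = 0 := by
    have := deriv_pip_const hIopen hs hγd hγd (k := -1) (fun t ht => h.mem_ads t ht)
    rw [pip_comm (γ s) (deriv γ s)] at this
    linarith
  have := frame_expand h hs (deriv γ s)
  rw [h1, h.tang_v₁ s hs, h.tang_v₂ s hs] at this
  simpa [curvA] using this

lemma deriv_v₁_eq (hIopen : IsOpen I) (h : IsFramedCurve I γ v₁ v₂ ε)
    {s : ℝ} (hs : s ∈ I) :
    deriv v₁ s = curvL ε v₁ v₂ s • v₂ s + curvM γ v₁ v₂ s • muF γ v₁ v₂ s := by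
  have hγd := diffAt_of_contDiffOn hIopen h.smooth_γ hs
  have hv₁d := diffAt_of_contDiffOn hIopen h.smooth_v₁ hs
  have hε2 : ε * ε = 1 := by rcases h.eps with rfl | rfl <;> norm_num
  have h1 : pip (deriv v₁ s) (γ s) = 0 := by
    have := deriv_pip_const hIopen hs hγd hv₁d (k := 0) h.orth_γv₁
    rw [h.tang_v₁ s hs, pip_comm (γ s) (deriv v₁ s)] at this
    linarith
  have h2 : pip (deriv v₁ s) (v₁ s) = 0 := by
    have := deriv_pip_const hIopen hs hv₁d hv₁d (k := ε) h.norm_v₁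
    rw [pip_comm (v₁ s) (deriv v₁ s)] at this
    linarith
  have := frame_expand h hs (deriv v₁ s)
  rw [h1, h2] at this
  rw [this]
  simp only [curvM, curvL, neg_zero, zero_smul, mul_zero, zero_add, neg_mul]

lemma deriv_v₂_eq (hIopen : IsOpen I) (h : IsFramedCurve I γ v₁ v₂ ε)
    {s : ℝ} (hs : s ∈ I) :
    deriv v₂ s = curvL ε v₁ v₂ s • v₁ s + curvN γ v₁ v₂ s • muF γ v₁ v₂ s := by
  have hγd := diffAt_of_contDiffOn hIopen h.smooth_γ hs
  have hv₁d := diffAt_of_contDiffOn hIopen h.smooth_v₁ hs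
  have hv₂d := diffAt_of_contDiffOn hIopen h.smooth_v₂ hs
  have h1 : pip (deriv v₂ s) (γ s) = 0 := by
    have := deriv_pip_const hIopen hs hγd hv₂d (k := 0) h.orth_γv₂
    rw [h.tang_v₂ s hs, pip_comm (γ s) (deriv v₂ s)] at this
    linarith
  have h2 : pip (deriv v₂ s) (v₂ s) = 0 := by
    have := deriv_pip_const hIopen hs hv₂d hv₂d (k := -ε) h.norm_v₂
    rw [pip_comm (v₂ s) (deriv v₂ s)] at this
    linarith
  have h3 : pip (deriv v₂ s) (v₁ s) = -pip (deriv v₁ s) (v₂ s) := by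
    have := deriv_pip_const hIopen hs hv₁d hv₂d (k := 0) h.orth_v₁v₂
    rw [pip_comm (v₁ s) (deriv v₂ s)] at this
    linarith
  have := frame_expand h hs (deriv v₂ s)
  rw [h1, h2, h3] at this
  rw [this]
  simp only [curvN, curvL, neg_zero, zero_smul, mul_zero, neg_mul, mul_neg,
    zero_add, neg_neg, add_zero]

lemma deriv_mu_eq (hIopen : IsOpen I) (h : IsFramedCurve I γ v₁ v₂ ε)
    {s : ℝ} (hs : s ∈ I) :
    deriv (muF γ v₁ v₂) s = curvA γ v₁ v₂ s • γ s
      + (-(ε * curvM γ v₁ v₂ s)) • v₁ s + (ε * curvN γ v₁ v₂ s) • v₂ s := by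
  have hγd := diffAt_of_contDiffOn hIopen h.smooth_γ hs
  have hv₁d := diffAt_of_contDiffOn hIopen h.smooth_v₁ hs
  have hv₂d := diffAt_of_contDiffOn hIopen h.smooth_v₂ hs
  have hμd := diffAt_of_contDiffOn hIopen (mu_smooth h) hs
  obtain ⟨hgg, h11, h22, hg1, hg2, h12, hμμ, hμg, hμ1, hμ2⟩ := frame_gram h hs
  have hγ' := deriv_gamma_eq hIopen h hs
  have hv₁' := deriv_v₁_eq hIopen h hs
  have hv₂' := deriv_v₂_eq hIopen h hs
  have h1 : pip (deriv (muF γ v₁ v₂) s) (γ s) = -curvA γ v₁ v₂ s := by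
    have := deriv_pip_const hIopen hs hμd hγd (k := 0)
      (fun t _ => pip_trip_fst (γ t) (v₁ t) (v₂ t))
    rw [hγ'] at this
    rw [pip_right_smul, hμμ] at this
    linarith
  have h2 : pip (deriv (muF γ v₁ v₂) s) (v₁ s) = -curvM γ v₁ v₂ s := by
    have := deriv_pip_const hIopen hs hμd hv₁d (k := 0)
      (fun t _ => pip_trip_snd (γ t) (v₁ t) (v₂ t))
    rw [hv₁', pip_right_add, pip_right_smul, pip_right_smul, hμμ, hμ2] at this
    linarith
  have h3 : pip (deriv (muF γ v₁ v₂) s) (v₂ s) = -curvN γ v₁ v₂ s := by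
    have := deriv_pip_const hIopen hs hμd hv₂d (k := 0)
      (fun t _ => pip_trip_thd (γ t) (v₁ t) (v₂ t))
    rw [hv₂', pip_right_add, pip_right_smul, pip_right_smul, hμμ, hμ1] at this
    linarith
  have h4 : pip (deriv (muF γ v₁ v₂) s) (muF γ v₁ v₂ s) = 0 := by
    have := deriv_pip_const hIopen hs hμd hμd (k := 1)
      (fun t ht => (frame_gram h ht).2.2.2.2.2.2.1)
    rw [pip_comm (muF γ v₁ v₂ s) (deriv (muF γ v₁ v₂) s)] at this
    linarith
  have := frame_expand h hs (deriv (muF γ v₁ v₂) s)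
  rw [h1, h2, h3, h4] at this
  rw [this]
  simp only [neg_neg, mul_neg, zero_smul, add_zero]

end Frame

section DSq
variable {I : Set ℝ} {γ v₁ v₂ : ℝ → R4} {ε : ℝ} {v₀ : R4}

lemma dsq_val (h : IsFramedCurve I γ v₁ v₂ ε) (hv₀ : v₀ ∈ AdS3)
    {s : ℝ} (hs : s ∈ I) : dSq γ v₀ s = -2 - 2 * pip (γ s) v₀ := by
  have h1 : pip (γ s) (γ s) = -1 := h.mem_ads s hs
  have h2 : pip v₀ v₀ = -1 := hv₀
  simp only [dSq, pip_sub_self, h1, h2]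
  ring

lemma dsq_d1 (hIopen : IsOpen I) (h : IsFramedCurve I γ v₁ v₂ ε)
    (hv₀ : v₀ ∈ AdS3) {s : ℝ} (hs : s ∈ I) :
    deriv (dSq γ v₀) s = -2 * (curvA γ v₁ v₂ s * pip (muF γ v₁ v₂ s) v₀) := by
  have hev : dSq γ v₀ =ᶠ[nhds s] fun t => -2 - 2 * pip (γ t) v₀ :=
    Filter.eventuallyEq_of_mem (hIopen.mem_nhds hs) (fun t ht => dsq_val h hv₀ ht)
  rw [hev.deriv_eq]
  have hA : HasDerivAt (fun t => pip (γ t) v₀)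
      (curvA γ v₁ v₂ s * pip (muF γ v₁ v₂ s) v₀) s := by
    have h1 := hasDerivAt_pipc (diffAt_of_contDiffOn hIopen h.smooth_γ hs).hasDerivAt v₀
    rw [deriv_gamma_eq hIopen h hs, pip_left_smul] at h1
    exact h1
  have H := (hasDerivAt_const s (-2 : ℝ)).sub (hA.const_mul 2)
  refine H.deriv.trans ?_
  ring

lemma dsq_d2 (hIopen : IsOpen I) (h : IsFramedCurve I γ v₁ v₂ ε)
    (hv₀ : v₀ ∈ AdS3) {s : ℝ} (hs : s ∈ I) :
    deriv (deriv (dSq γ v₀)) s =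
      -2 * (deriv (curvA γ v₁ v₂) s * pip (muF γ v₁ v₂ s) v₀
        + curvA γ v₁ v₂ s * (curvA γ v₁ v₂ s * pip (γ s) v₀
          + -(ε * curvM γ v₁ v₂ s) * pip (v₁ s) v₀
          + ε * curvN γ v₁ v₂ s * pip (v₂ s) v₀)) := by
  have hγd := (h.smooth_γ.deriv_of_isOpen (m := (⊤ : ℕ∞)) hIopen (by simp))
  have hαsm : ContDiffOn ℝ (⊤ : ℕ∞) (curvA γ v₁ v₂) I := hγd.pip2 (mu_smooth h)
  have hev : deriv (dSq γ v₀) =ᶠ[nhds s]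
      fun t => -2 * (curvA γ v₁ v₂ t * pip (muF γ v₁ v₂ t) v₀) :=
    Filter.eventuallyEq_of_mem (hIopen.mem_nhds hs)
      (fun t ht => dsq_d1 hIopen h hv₀ ht)
  rw [hev.deriv_eq]
  have hαd : HasDerivAt (curvA γ v₁ v₂) (deriv (curvA γ v₁ v₂) s) s :=
    (diffAt_of_contDiffOn' hIopen hαsm hs).hasDerivAt
  have hDd : HasDerivAt (fun t => pip (muF γ v₁ v₂ t) v₀)
      (curvA γ v₁ v₂ s * pip (γ s) v₀ + -(ε * curvM γ v₁ v₂ s) * pip (v₁ s) v₀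
        + ε * curvN γ v₁ v₂ s * pip (v₂ s) v₀) s := by
    have h1 := hasDerivAt_pipc
      (diffAt_of_contDiffOn hIopen (mu_smooth h) hs).hasDerivAt v₀
    rw [deriv_mu_eq hIopen h hs, pip_left_add, pip_left_add, pip_left_smul,
      pip_left_smul, pip_left_smul] at h1
    exact h1
  have H := (hαd.mul hDd).const_mul (-2 : ℝ)
  exact H.deriv

lemma dsq_d3 (hIopen : IsOpen I) (h : IsFramedCurve I γ v₁ v₂ ε)
    (hv₀ : v₀ ∈ AdS3) {s : ℝ} (hs : s ∈ I) :
    deriv (deriv (deriv (dSq γ v₀))) s =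
      -2 * (deriv (deriv (curvA γ v₁ v₂)) s * pip (muF γ v₁ v₂ s) v₀
        + 2 * deriv (curvA γ v₁ v₂) s * (curvA γ v₁ v₂ s * pip (γ s) v₀
          + -(ε * curvM γ v₁ v₂ s) * pip (v₁ s) v₀
          + ε * curvN γ v₁ v₂ s * pip (v₂ s) v₀)
        + curvA γ v₁ v₂ s * (deriv (curvA γ v₁ v₂) s * pip (γ s) v₀
          + curvA γ v₁ v₂ s * (curvA γ v₁ v₂ s * pip (muF γ v₁ v₂ s) v₀)
          - ε * (deriv (curvM γ v₁ v₂) s * pip (v₁ s) v₀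
              + curvM γ v₁ v₂ s * (curvL ε v₁ v₂ s * pip (v₂ s) v₀
                + curvM γ v₁ v₂ s * pip (muF γ v₁ v₂ s) v₀))
          + ε * (deriv (curvN γ v₁ v₂) s * pip (v₂ s) v₀
              + curvN γ v₁ v₂ s * (curvL ε v₁ v₂ s * pip (v₁ s) v₀
                + curvN γ v₁ v₂ s * pip (muF γ v₁ v₂ s) v₀)))) := by
  have hγd := (h.smooth_γ.deriv_of_isOpen (m := (⊤ : ℕ∞)) hIopen (by simp))
  have hv₁d := (h.smooth_v₁.deriv_of_isOpen (m := (⊤ : ℕ∞)) hIopen (by simp))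
  have hv₂d := (h.smooth_v₂.deriv_of_isOpen (m := (⊤ : ℕ∞)) hIopen (by simp))
  have hμsm := mu_smooth h
  have hαsm : ContDiffOn ℝ (⊤ : ℕ∞) (curvA γ v₁ v₂) I := hγd.pip2 hμsm
  have hmsm : ContDiffOn ℝ (⊤ : ℕ∞) (curvM γ v₁ v₂) I := hv₁d.pip2 hμsm
  have hnsm : ContDiffOn ℝ (⊤ : ℕ∞) (curvN γ v₁ v₂) I := hv₂d.pip2 hμsm
  have hα'sm : ContDiffOn ℝ (⊤ : ℕ∞) (deriv (curvA γ v₁ v₂)) I :=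
    hαsm.deriv_of_isOpen (m := (⊤ : ℕ∞)) hIopen (by simp)
  have hev : deriv (deriv (dSq γ v₀)) =ᶠ[nhds s]
      fun t => -2 * (deriv (curvA γ v₁ v₂) t * pip (muF γ v₁ v₂ t) v₀
        + curvA γ v₁ v₂ t * (curvA γ v₁ v₂ t * pip (γ t) v₀
          + -(ε * curvM γ v₁ v₂ t) * pip (v₁ t) v₀
          + ε * curvN γ v₁ v₂ t * pip (v₂ t) v₀)) :=
    Filter.eventuallyEq_of_mem (hIopen.mem_nhds hs)
      (fun t ht => dsq_d2 hIopen h hv₀ ht)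
  rw [hev.deriv_eq]
  have hαd : HasDerivAt (curvA γ v₁ v₂) (deriv (curvA γ v₁ v₂) s) s :=
    (diffAt_of_contDiffOn' hIopen hαsm hs).hasDerivAt
  have hα'd : HasDerivAt (deriv (curvA γ v₁ v₂))
      (deriv (deriv (curvA γ v₁ v₂)) s) s :=
    (diffAt_of_contDiffOn' hIopen hα'sm hs).hasDerivAt
  have hmd : HasDerivAt (curvM γ v₁ v₂) (deriv (curvM γ v₁ v₂) s) s :=
    (diffAt_of_contDiffOn' hIopen hmsm hs).hasDerivAt
  have hnd : HasDerivAt (curvN γ v₁ v₂) (deriv (curvN γ v₁ v₂) s) s :=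
    (diffAt_of_contDiffOn' hIopen hnsm hs).hasDerivAt
  have hAd : HasDerivAt (fun t => pip (γ t) v₀)
      (curvA γ v₁ v₂ s * pip (muF γ v₁ v₂ s) v₀) s := by
    have h1 := hasDerivAt_pipc (diffAt_of_contDiffOn hIopen h.smooth_γ hs).hasDerivAt v₀
    rw [deriv_gamma_eq hIopen h hs, pip_left_smul] at h1
    exact h1
  have hBd : HasDerivAt (fun t => pip (v₁ t) v₀)
      (curvL ε v₁ v₂ s * pip (v₂ s) v₀
        + curvM γ v₁ v₂ s * pip (muF γ v₁ v₂ s) v₀) s := by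
    have h1 := hasDerivAt_pipc (diffAt_of_contDiffOn hIopen h.smooth_v₁ hs).hasDerivAt v₀
    rw [deriv_v₁_eq hIopen h hs, pip_left_add, pip_left_smul, pip_left_smul] at h1
    exact h1
  have hCd : HasDerivAt (fun t => pip (v₂ t) v₀)
      (curvL ε v₁ v₂ s * pip (v₁ s) v₀
        + curvN γ v₁ v₂ s * pip (muF γ v₁ v₂ s) v₀) s := by
    have h1 := hasDerivAt_pipc (diffAt_of_contDiffOn hIopen h.smooth_v₂ hs).hasDerivAt v₀
    rw [deriv_v₂_eq hIopen h hs, pip_left_add, pip_left_smul, pip_left_smul] at h1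
    exact h1
  have hDd : HasDerivAt (fun t => pip (muF γ v₁ v₂ t) v₀)
      (curvA γ v₁ v₂ s * pip (γ s) v₀ + -(ε * curvM γ v₁ v₂ s) * pip (v₁ s) v₀
        + ε * curvN γ v₁ v₂ s * pip (v₂ s) v₀) s := by
    have h1 := hasDerivAt_pipc
      (diffAt_of_contDiffOn hIopen (mu_smooth h) hs).hasDerivAt v₀
    rw [deriv_mu_eq hIopen h hs, pip_left_add, pip_left_add, pip_left_smul,
      pip_left_smul, pip_left_smul] at h1
    exact h1
  have inner : HasDerivAt (fun t => curvA γ v₁ v₂ t * pip (γ t) v₀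
      + -(ε * curvM γ v₁ v₂ t) * pip (v₁ t) v₀
      + ε * curvN γ v₁ v₂ t * pip (v₂ t) v₀)
      ((deriv (curvA γ v₁ v₂) s * pip (γ s) v₀
          + curvA γ v₁ v₂ s * (curvA γ v₁ v₂ s * pip (muF γ v₁ v₂ s) v₀))
        + (-(ε * deriv (curvM γ v₁ v₂) s) * pip (v₁ s) v₀
          + -(ε * curvM γ v₁ v₂ s) * (curvL ε v₁ v₂ s * pip (v₂ s) v₀
            + curvM γ v₁ v₂ s * pip (muF γ v₁ v₂ s) v₀))
        + (ε * deriv (curvN γ v₁ v₂) s * pip (v₂ s) v₀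
          + ε * curvN γ v₁ v₂ s * (curvL ε v₁ v₂ s * pip (v₁ s) v₀
            + curvN γ v₁ v₂ s * pip (muF γ v₁ v₂ s) v₀))) s := by
    exact ((hαd.mul hAd).add (((hmd.const_mul ε).neg).mul hBd)).add
      ((hnd.const_mul ε).mul hCd)
  have H := ((hα'd.mul hDd).add (hαd.mul inner)).const_mul (-2 : ℝ)
  refine H.deriv.trans ?_
  ring

end DSq


/-- Proposition 5.1 (4): characterization of
d_{v₀}(s₀) = d′_{v₀}(s₀) = d″_{v₀}(s₀) = d‴_{v₀}(s₀) = 0. -/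
theorem dist_squared_third_iff
    (I : Set ℝ) (hIopen : IsOpen I) (hIconn : I.OrdConnected)
    (γ v₁ v₂ : ℝ → R4) (ε : ℝ) (h : IsFramedCurve I γ v₁ v₂ ε)
    (v₀ : R4) (hv₀ : v₀ ∈ AdS3) (s₀ : ℝ) (hs₀ : s₀ ∈ I)
    (hmnp : ∀ s ∈ I, curvM γ v₁ v₂ s + curvN γ v₁ v₂ s ≠ 0)
    (hmnm : ∀ s ∈ I, curvM γ v₁ v₂ s - curvN γ v₁ v₂ s ≠ 0) :
    (dSq γ v₀ s₀ = 0 ∧ deriv (dSq γ v₀) s₀ = 0 ∧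
        deriv (deriv (dSq γ v₀)) s₀ = 0 ∧
        deriv (deriv (deriv (dSq γ v₀))) s₀ = 0) ↔
      ((∃ a b c : ℝ,
        v₀ = γ s₀ + a • v₁ s₀ + b • v₂ s₀ + c • muF γ v₁ v₂ s₀ ∧
        c ^ 2 = -ε * (a ^ 2 - b ^ 2)) ∧
        ((curvA γ v₁ v₂ s₀ = 0 ∧ deriv (curvA γ v₁ v₂) s₀ = 0 ∧
            deriv (deriv (curvA γ v₁ v₂)) s₀ = 0) ∨
          (curvA γ v₁ v₂ s₀ = 0 ∧ deriv (curvA γ v₁ v₂) s₀ = 0 ∧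
            ∃ lam : ℝ, v₀ = γ s₀ + lam • (v₁ s₀ + v₂ s₀) ∨
              v₀ = γ s₀ + lam • (v₁ s₀ - v₂ s₀)) ∨
          (curvA γ v₁ v₂ s₀ = 0 ∧ v₀ = γ s₀) ∨
          ((v₀ = γ s₀ - (curvA γ v₁ v₂ s₀ /
                (curvM γ v₁ v₂ s₀ + curvN γ v₁ v₂ s₀)) • (v₁ s₀ + v₂ s₀) ∧
              sigmaF γ v₁ v₂ ε 1 s₀ = 0) ∨
            (v₀ = γ s₀ - (curvA γ v₁ v₂ s₀ /
                (curvM γ v₁ v₂ s₀ - curvN γ v₁ v₂ s₀)) • (v₁ s₀ - v₂ s₀) ∧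
              sigmaF γ v₁ v₂ ε (-1) s₀ = 0)))) := by
  have hε2 : ε * ε = 1 := by rcases h.eps with rfl | rfl <;> norm_num
  have hε0 : ε ≠ 0 := by rcases h.eps with rfl | rfl <;> norm_num
  obtain ⟨hgg, h11, h22, hg1, hg2, h12, hμμ, hμg, hμ1, hμ2⟩ := frame_gram h hs₀
  have hg1' : pip (v₁ s₀) (γ s₀) = 0 := by rw [pip_comm]; exact hg1
  have hg2' : pip (v₂ s₀) (γ s₀) = 0 := by rw [pip_comm]; exact hg2
  have h12' : pip (v₂ s₀) (v₁ s₀) = 0 := by rw [pip_comm]; exact h12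
  have hγμ : pip (γ s₀) (muF γ v₁ v₂ s₀) = 0 := by rw [pip_comm]; exact hμg
  have h1μ : pip (v₁ s₀) (muF γ v₁ v₂ s₀) = 0 := by rw [pip_comm]; exact hμ1
  have h2μ : pip (v₂ s₀) (muF γ v₁ v₂ s₀) = 0 := by rw [pip_comm]; exact hμ2
  have hd0 := dsq_val h hv₀ hs₀
  have hd1 := dsq_d1 hIopen h hv₀ hs₀
  have hd2 := dsq_d2 hIopen h hv₀ hs₀
  have hd3 := dsq_d3 hIopen h hv₀ hs₀
  have hexp := frame_expand h hs₀ v₀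
  rw [pip_comm v₀ (γ s₀), pip_comm v₀ (v₁ s₀), pip_comm v₀ (v₂ s₀),
    pip_comm v₀ (muF γ v₁ v₂ s₀)] at hexp
  have hP := hmnp s₀ hs₀
  have hQ := hmnm s₀ hs₀
  simp only [sigmaF, one_mul, neg_one_mul]
  set αv := curvA γ v₁ v₂ s₀ with hαv
  set α1 := deriv (curvA γ v₁ v₂) s₀ with hα1
  set α2 := deriv (deriv (curvA γ v₁ v₂)) s₀ with hα2
  set lv := curvL ε v₁ v₂ s₀ with hlv
  set mv := curvM γ v₁ v₂ s₀ with hmv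
  set nv := curvN γ v₁ v₂ s₀ with hnv
  set m1 := deriv (curvM γ v₁ v₂) s₀ with hm1
  set n1 := deriv (curvN γ v₁ v₂) s₀ with hn1
  set Av := pip (γ s₀) v₀ with hAv
  set Bv := pip (v₁ s₀) v₀ with hBv
  set Cv := pip (v₂ s₀) v₀ with hCv
  set Dv := pip (muF γ v₁ v₂ s₀) v₀ with hDv
  constructor
  · rintro ⟨e0, e1, e2, e3⟩
    rw [hd0] at e0
    have hA1 : Av = -1 := by linarith
    rw [hd1] at e1
    rw [hd2, hA1] at e2
    rw [hd3, hA1] at e3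
    -- representation
    have hrep : v₀ = γ s₀ + (ε * Bv) • v₁ s₀ + (-(ε * Cv)) • v₂ s₀
        + Dv • muF γ v₁ v₂ s₀ := by
      rw [hexp, hA1]
      norm_num
    have hvv : pip v₀ v₀ = -1 := hv₀
    rw [hrep] at hvv
    simp only [pip_left_add, pip_left_smul, pip_right_add, pip_right_smul,
      hgg, h11, h22, hg1, hg2, h12, hμμ, hμg, hμ1, hμ2, hg1', hg2', h12',
      hγμ, h1μ, h2μ] at hvv
    refine ⟨⟨ε * Bv, -(ε * Cv), Dv, hrep, by linear_combination hvv⟩, ?_⟩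
    -- clean scalar conditions
    have E1 : αv * Dv = 0 := by linarith
    have E2 : α1 * Dv - αv * αv - αv * (mv * (ε * Bv) + nv * (-(ε * Cv))) = 0 := by
      linear_combination (-1/2 : ℝ) * e2
    have E3 : α2 * Dv + 2 * α1 * (-αv - mv * (ε * Bv) - nv * (-(ε * Cv)))
        + αv * (-α1 + αv * αv * Dv - m1 * (ε * Bv) + mv * lv * (-(ε * Cv))
          - ε * mv * mv * Dv - n1 * (-(ε * Cv)) + nv * lv * (ε * Bv)
          + ε * nv * nv * Dv) = 0 := by
      linear_combination (-1/2 : ℝ) * e3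
    by_cases hDv0 : Dv = 0
    · -- c = 0 : nullcone cases
      have hBC : Bv * Bv - Cv * Cv = 0 := by
        have key : ε * (Bv * Bv - Cv * Cv) = 0 := by
          linear_combination hvv - Dv * hDv0 - ε * (Bv * Bv - Cv * Cv) * hε2
        exact (mul_eq_zero.mp key).resolve_left hε0
      have hBCfac : (Bv - Cv) * (Bv + Cv) = 0 := by linear_combination hBC
      rw [hDv0] at E2 E3
      rcases mul_eq_zero.mp hBCfac with hBC1 | hBC2
      · -- Cv = Bv, i.e. b = -a : the minus-sign family
        have hCB : Cv = Bv := by linarith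
        rw [hCB] at E2 E3
        by_cases hα : αv = 0
        · rw [hα] at E3
          have k3 : (α1 * (ε * Bv)) * (mv - nv) = 0 := by
            linear_combination (-1/2 : ℝ) * E3
          rcases mul_eq_zero.mp k3 with k4 | k5
          · rcases mul_eq_zero.mp k4 with hα1' | haz
            · right; left
              refine ⟨hα, hα1', ε * Bv, Or.inr ?_⟩
              rw [hrep, hCB, hDv0]
              module
            · right; right; left
              refine ⟨hα, ?_⟩
              have hB0 : Bv = 0 := (mul_eq_zero.mp haz).resolve_left hε0
              rw [hrep, hCB, hDv0, hB0]
              simp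
          · exact absurd k5 hQ
        · -- case (iv) minus
          have hsum : αv + (ε * Bv) * (mv - nv) = 0 := by
            have k : αv * (αv + (ε * Bv) * (mv - nv)) = 0 := by
              linear_combination (-1 : ℝ) * E2
            exact (mul_eq_zero.mp k).resolve_left hα
          have hX : -α1 + (ε * Bv) * (-(m1 - n1) + lv * (nv - mv)) = 0 := by
            have k : αv * (-α1 + (ε * Bv) * (-(m1 - n1) + lv * (nv - mv))) = 0 := by
              linear_combination E3 + 2 * α1 * hsum
            exact (mul_eq_zero.mp k).resolve_left hα
          right; right; right; right
          have hB' : ε * Bv = -(αv / (mv - nv)) := by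
            field_simp
            linear_combination hsum
          constructor
          · have hC' : -(ε * Cv) = αv / (mv - nv) := by
              rw [hCB]
              linear_combination (-1 : ℝ) * hB'
            rw [hrep, hDv0, hB', hC']
            module
          · linear_combination (-(m1 - n1) + lv * (nv - mv)) * hsum - (mv - nv) * hX
      · -- Cv = -Bv, i.e. b = a : the plus-sign family
        have hCB : Cv = -Bv := by linarith
        rw [hCB] at E2 E3
        by_cases hα : αv = 0
        · rw [hα] at E3
          have k3 : (α1 * (ε * Bv)) * (mv + nv) = 0 := by
            linear_combination (-1/2 : ℝ) * E3
          rcases mul_eq_zero.mp k3 with k4 | k5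
          · rcases mul_eq_zero.mp k4 with hα1' | haz
            · right; left
              refine ⟨hα, hα1', ε * Bv, Or.inl ?_⟩
              rw [hrep, hCB, hDv0]
              module
            · right; right; left
              refine ⟨hα, ?_⟩
              have hB0 : Bv = 0 := (mul_eq_zero.mp haz).resolve_left hε0
              rw [hrep, hCB, hDv0, hB0]
              simp
          · exact absurd k5 hP
        · -- case (iv) plus
          have hsum : αv + (ε * Bv) * (mv + nv) = 0 := by
            have k : αv * (αv + (ε * Bv) * (mv + nv)) = 0 := by
              linear_combination (-1 : ℝ) * E2
            exact (mul_eq_zero.mp k).resolve_left hα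
          have hX : -α1 + (ε * Bv) * (-(m1 + n1) + lv * (nv + mv)) = 0 := by
            have k : αv * (-α1 + (ε * Bv) * (-(m1 + n1) + lv * (nv + mv))) = 0 := by
              linear_combination E3 + 2 * α1 * hsum
            exact (mul_eq_zero.mp k).resolve_left hα
          right; right; right; left
          have hB' : ε * Bv = -(αv / (mv + nv)) := by
            field_simp
            linear_combination hsum
          constructor
          · have hC' : -(ε * Cv) = -(αv / (mv + nv)) := by
              rw [hCB]
              linear_combination hB'
            rw [hrep, hDv0, hB', hC']
            module
          · linear_combination (-(m1 + n1) + lv * (nv + mv)) * hsum - (mv + nv) * hX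
    · -- c ≠ 0 : case (i)
      have hα : αv = 0 := (mul_eq_zero.mp E1).resolve_right hDv0
      rw [hα] at E2 E3
      have hα1' : α1 = 0 := by
        have k : α1 * Dv = 0 := by linear_combination E2
        exact (mul_eq_zero.mp k).resolve_right hDv0
      rw [hα1'] at E3
      have hα2' : α2 = 0 := by
        have k : α2 * Dv = 0 := by linear_combination E3
        exact (mul_eq_zero.mp k).resolve_right hDv0
      exact Or.inl ⟨hα, hα1', hα2'⟩
  · rintro ⟨⟨a, b, c, hrep, hc2⟩, hcase⟩
    have hA1 : Av = -1 := by
      rw [hAv, hrep]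
      simp only [pip_right_add, pip_right_smul, hgg, hg1, hg2, hγμ]
      ring
    have hB1 : Bv = ε * a := by
      rw [hBv, hrep]
      simp only [pip_right_add, pip_right_smul, hg1', h11, h12, h1μ]
      ring
    have hC1 : Cv = -(ε * b) := by
      rw [hCv, hrep]
      simp only [pip_right_add, pip_right_smul, hg2', h12', h22, h2μ]
      ring
    have hD1 : Dv = c := by
      rw [hDv, hrep]
      simp only [pip_right_add, pip_right_smul, hμg, hμ1, hμ2, hμμ]
      ring
    have g1 : dSq γ v₀ s₀ = 0 := by rw [hd0, hA1]; norm_num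
    rcases hcase with ⟨h1, h2, h3⟩ | ⟨h1, h2, lam, hlam⟩ | ⟨h1, hveq⟩ |
      (⟨hveq, hσ⟩ | ⟨hveq, hσ⟩)
    · exact ⟨g1, by rw [hd1, h1]; ring, by rw [hd2, h1, h2]; ring,
        by rw [hd3, h1, h2, h3]; ring⟩
    · have hDv0 : Dv = 0 := by
        rcases hlam with hl | hl <;>
        · rw [hDv, hl]
          simp [pip_right_add, pip_right_sub, pip_right_smul, hμg, hμ1, hμ2]
      exact ⟨g1, by rw [hd1, h1]; ring, by rw [hd2, h1, h2]; ring,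
        by rw [hd3, h1, h2, hDv0]; ring⟩
    · have hBv0 : Bv = 0 := by rw [hBv, hveq]; exact hg1'
      have hCv0 : Cv = 0 := by rw [hCv, hveq]; exact hg2'
      have hDv0 : Dv = 0 := by rw [hDv, hveq]; exact hμg
      exact ⟨g1, by rw [hd1, h1]; ring, by rw [hd2, h1, hDv0]; ring,
        by rw [hd3, h1, hBv0, hCv0, hDv0]; ring⟩
    · -- case (iv) plus
      have hDv0 : Dv = 0 := by
        rw [hDv, hveq]
        simp [pip_right_add, pip_right_sub, pip_right_smul, hμg, hμ1, hμ2]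
      have hεB : ε * Bv * (mv + nv) = -αv := by
        rw [hBv, hveq]
        simp only [pip_right_add, pip_right_sub, pip_right_smul, hg1', h11, h12]
        field_simp [hP]
        linear_combination (-αv) * hε2
      have hεC : ε * Cv * (mv + nv) = αv := by
        rw [hCv, hveq]
        simp only [pip_right_add, pip_right_sub, pip_right_smul, hg2', h12', h22]
        field_simp [hP]
        linear_combination αv * hε2
      have hW : (mv + nv) * (αv * (-1 : ℝ) + -(ε * mv) * Bv + ε * nv * Cv) = 0 := by
        linear_combination (-mv) * hεB + nv * hεC
      have hZ : (mv + nv) * (α1 * (-1 : ℝ)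
          - ε * (m1 * Bv + mv * (lv * Cv + mv * 0))
          + ε * (n1 * Cv + nv * (lv * Bv + nv * 0))) = 0 := by
        linear_combination (-m1 + nv * lv) * hεB + (-(mv * lv) + n1) * hεC - hσ
      have hWz := (mul_eq_zero.mp hW).resolve_left hP
      have hZz := (mul_eq_zero.mp hZ).resolve_left hP
      refine ⟨g1, by rw [hd1, hDv0]; ring, ?_, ?_⟩
      · rw [hd2, hA1, hDv0]
        linear_combination (-2 * αv) * hWz
      · rw [hd3, hA1, hDv0]
        linear_combination (-4 * α1) * hWz + (-2 * αv) * hZz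
    · -- case (iv) minus
      have hDv0 : Dv = 0 := by
        rw [hDv, hveq]
        simp [pip_right_add, pip_right_sub, pip_right_smul, hμg, hμ1, hμ2]
      have hεB : ε * Bv * (mv - nv) = -αv := by
        rw [hBv, hveq]
        simp only [pip_right_add, pip_right_sub, pip_right_smul, hg1', h11, h12]
        field_simp [hQ]
        linear_combination (-αv) * hε2
      have hεC : ε * Cv * (mv - nv) = -αv := by
        rw [hCv, hveq]
        simp only [pip_right_add, pip_right_sub, pip_right_smul, hg2', h12', h22]
        field_simp [hQ]
        linear_combination (-αv) * hε2
      have hW : (mv - nv) * (αv * (-1 : ℝ) + -(ε * mv) * Bv + ε * nv * Cv) = 0 := by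
        linear_combination (-mv) * hεB + nv * hεC
      have hZ : (mv - nv) * (α1 * (-1 : ℝ)
          - ε * (m1 * Bv + mv * (lv * Cv + mv * 0))
          + ε * (n1 * Cv + nv * (lv * Bv + nv * 0))) = 0 := by
        linear_combination (-m1 + nv * lv) * hεB + (-(mv * lv) + n1) * hεC - hσ
      have hWz := (mul_eq_zero.mp hW).resolve_left hQ
      have hZz := (mul_eq_zero.mp hZ).resolve_left hQ
      refine ⟨g1, by rw [hd1, hDv0]; ring, ?_, ?_⟩
      · rw [hd2, hA1, hDv0]
        linear_combination (-2 * αv) * hWz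
      · rw [hd3, hA1, hDv0]
        linear_combination (-4 * α1) * hWz + (-2 * αv) * hZz
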